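/- arXiv:1202.6639 — 3 statements merged into one kernel-verified Lean document; each statement's English description precedes it below -/
import Mathlib

section
/- Let P(z) ∈ 𝒞₀^ω[z] be a monic polynomial of degree d ≥ 2 that is irreducible in 𝒞₀^ω[z], and let r > 0 and η analytic on 𝔻_r satisfy P_{w^d}(z) = ∏_{k=0}^{d−1} ( z − η(e^{2πik/d} w) ) for all w ∈ 𝔻_r. Write the Taylor expansion η(w) = Σ_{n=0}^∞ η_n w^n. Then there exists an integer L ≥ 1 such that η_L ≠ 0 and d does not divide L. -/
open Filter Metric Polynomial Complex

noncomputable section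

/-- The ring `𝒞₀^ω` of germs at `0` of complex-analytic functions, realized as a
subring of the ring of germs at `0` of complex-valued functions. -/
def analyticGermRing : Subring ((nhds (0:ℂ)).Germ ℂ) where
  carrier := {g | ∃ f : ℂ → ℂ, AnalyticAt ℂ f 0 ∧ g = Filter.Germ.ofFun f}
  mul_mem' := by
    rintro a b ⟨f, hf, rfl⟩ ⟨g, hg, rfl⟩
    exact ⟨f * g, hf.mul hg, rfl⟩
  one_mem' := ⟨1, analyticAt_const, rfl⟩
  add_mem' := by
    rintro a b ⟨f, hf, rfl⟩ ⟨g, hg, rfl⟩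
    exact ⟨f + g, hf.add hg, rfl⟩
  zero_mem' := ⟨0, analyticAt_const, rfl⟩
  neg_mem' := by
    rintro a ⟨f, hf, rfl⟩
    exact ⟨-f, hf.neg, rfl⟩

/-- The germ at `0` of a function analytic at `0`, as an element of `analyticGermRing`. -/
def germOf (f : ℂ → ℂ) (hf : AnalyticAt ℂ f 0) : analyticGermRing :=
  ⟨Filter.Germ.ofFun f, f, hf, rfl⟩

/-- The monic polynomial `z^d + a_{d-1}(w) z^{d-1} + ⋯ + a_0(w)` with coefficients
evaluated at `w`. -/
def polyEval (d : ℕ) (a : Fin d → ℂ → ℂ) (w : ℂ) : Polynomial ℂ :=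
  X ^ d + ∑ i : Fin d, C (a i w) * X ^ (i : ℕ)

/-- The monic polynomial `z^d + a_{d-1} z^{d-1} + ⋯ + a_0` over `𝒞₀^ω`. -/
def polyGerm (d : ℕ) (a : Fin d → ℂ → ℂ) (ha : ∀ i, AnalyticAt ℂ (a i) 0) :
    Polynomial analyticGermRing :=
  X ^ d + ∑ i : Fin d, C (germOf (a i) (ha i)) * X ^ (i : ℕ)

/-!
Suppose every nonzero Taylor coefficient `c n` with `n ≥ 1` had `d ∣ n`. Then `η (ζ w) = η w` for
every `d`-th root of unity `ζ`, so the factorization collapses to `P_{w^d} = (z - η w)^d`.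
Comparing coefficients of `z^{d-1}` gives `η w = -a_{d-1}(w^d) / d`, hence the analytic germ
`g = -a_{d-1} / d` is a root of `P`. Then `X - g` divides the monic polynomial `P` of degree
`d ≥ 2`, so `P` is not irreducible.
-/

namespace Polynomial

theorem Monic.not_isRoot_of_irreducible {R : Type*} [CommRing R] {p : R[X]} (hp : p.Monic)
    (hirr : Irreducible p) (hdeg : p.natDegree ≠ 1) (x : R) : ¬p.IsRoot x := by
  intro hx
  cases subsingleton_or_nontrivial R
  · exact hirr.not_isUnit (isUnit_of_subsingleton p)
  obtain ⟨q, rfl⟩ := dvd_iff_isRoot.2 hx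
  have hq : q.Monic := (monic_X_sub_C x).of_mul_monic_left hp
  rcases hirr.isUnit_or_isUnit rfl with hX | hu
  · exact not_isUnit_X_sub_C x hX
  · rw [hq.isUnit_iff.mp hu, mul_one, natDegree_X_sub_C] at hdeg
    exact hdeg rfl

section FinSum

variable {R : Type*} [CommRing R] {d : ℕ} (b : Fin d → R)

theorem monic_X_pow_add_sum_fin : (X ^ d + ∑ i : Fin d, C (b i) * X ^ (i : ℕ)).Monic :=
  monic_X_pow_add (degree_sum_fin_lt b)

theorem natDegree_X_pow_add_sum_fin [Nontrivial R] :
    (X ^ d + ∑ i : Fin d, C (b i) * X ^ (i : ℕ)).natDegree = d :=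
  natDegree_eq_of_degree_eq_some <| by
    rw [degree_add_eq_left_of_degree_lt (by simpa using degree_sum_fin_lt b), degree_X_pow]

theorem coeff_X_pow_add_sum_fin (i : Fin d) :
    (X ^ d + ∑ i : Fin d, C (b i) * X ^ (i : ℕ)).coeff i = b i := by
  simp [coeff_X_pow, i.isLt.ne, Fin.val_inj]

end FinSum

theorem coeff_pred_X_sub_C_pow {R : Type*} [CommRing R] (y : R) {d : ℕ} (hd : 0 < d) :
    ((X - C y) ^ d).coeff (d - 1) = -(d * y) := by
  simpa using prod_X_sub_C_coeff_card_pred (Finset.range d) (fun _ => y) (by simpa using hd)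

theorem eq_neg_coeff_pred_div_of_eq_X_sub_C_pow {K : Type*} [Field K] [CharZero K] {p : K[X]}
    {y : K} {d : ℕ} (hd : 0 < d) (hp : p = (X - C y) ^ d) : y = -p.coeff (d - 1) / d := by
  rw [hp, coeff_pred_X_sub_C_pow y hd, neg_neg,
    mul_div_cancel_left₀ _ (Nat.cast_ne_zero.mpr hd.ne')]

end Polynomial

theorem exp_two_pi_I_mul_div_pow_self (k : ℕ) {d : ℕ} (hd : d ≠ 0) :
    exp (2 * Real.pi * I * k / d) ^ d = 1 := by
  rw [← exp_nat_mul, ← exp_nat_mul_two_pi_mul_I k]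
  congr 1
  field_simp

theorem hasSum_mul_mul_pow_of_pow_eq_one {R : Type*} [CommSemiring R] [TopologicalSpace R]
    {c : ℕ → R} {d : ℕ} (hc : ∀ n, c n ≠ 0 → d ∣ n) {ζ w s : R} (hζ : ζ ^ d = 1)
    (h : HasSum (fun n => c n * w ^ n) s) : HasSum (fun n => c n * (ζ * w) ^ n) s := by
  convert h using 2 with n
  by_cases hn : c n = 0
  · simp [hn]
  · obtain ⟨m, rfl⟩ := hc n hn
    rw [mul_pow, pow_mul, hζ, one_pow, one_mul]

theorem apply_mul_eq_of_hasSum_of_pow_eq_one {c : ℕ → ℂ} {f : ℂ → ℂ} {r : ℝ}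
    (hf : ∀ w ∈ ball (0:ℂ) r, HasSum (fun n => c n * w ^ n) (f w)) {d : ℕ} (hd : d ≠ 0)
    (hc : ∀ n, c n ≠ 0 → d ∣ n) {ζ : ℂ} (hζ : ζ ^ d = 1) {w : ℂ} (hw : w ∈ ball 0 r) :
    f (ζ * w) = f w := by
  have hζw : ζ * w ∈ ball (0:ℂ) r := by
    rwa [mem_ball_zero_iff, norm_mul, norm_eq_one_of_pow_eq_one hζ hd, one_mul,
      ← mem_ball_zero_iff]
  exact (hf _ hζw).unique (hasSum_mul_mul_pow_of_pow_eq_one hc hζ (hf w hw))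

theorem coe_eval_germOf_polyGerm (d : ℕ) (a : Fin d → ℂ → ℂ) (ha : ∀ i, AnalyticAt ℂ (a i) 0)
    {f : ℂ → ℂ} (hf : AnalyticAt ℂ f 0) :
    (((polyGerm d a ha).eval (germOf f hf) : analyticGermRing) : (nhds (0:ℂ)).Germ ℂ) =
      Germ.ofFun fun v => (polyEval d a v).eval (f v) := by
  change analyticGermRing.subtype _ = _
  rw [← eval₂_hom]
  have hfun : (fun v => (polyEval d a v).eval (f v)) = f ^ d + ∑ i : Fin d, a i * f ^ (i : ℕ) := by
    ext v
    simp [polyEval, eval_finsetSum, Finset.sum_apply]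
  rw [hfun]
  simp [polyGerm, eval₂_finsetSum, germOf]

theorem isRoot_polyGerm_germOf {d : ℕ} {a : Fin d → ℂ → ℂ} (ha : ∀ i, AnalyticAt ℂ (a i) 0)
    {f : ℂ → ℂ} (hf : AnalyticAt ℂ f 0) (hroot : ∀ᶠ v in nhds 0, (polyEval d a v).IsRoot (f v)) :
    (polyGerm d a ha).IsRoot (germOf f hf) :=
  Subtype.ext <| (coe_eval_germOf_polyGerm d a ha hf).trans (Germ.coe_eq.mpr hroot)

theorem isRoot_polyEval_of_eq_X_sub_C_pow {d : ℕ} (hd : 0 < d) {a : Fin d → ℂ → ℂ} {r : ℝ}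
    (hr : 0 ≤ r) {η : ℂ → ℂ} (hpow : ∀ w ∈ ball (0:ℂ) r, polyEval d a (w ^ d) = (X - C (η w)) ^ d)
    {v : ℂ} (hv : v ∈ ball (0:ℂ) (r ^ d)) :
    (polyEval d a v).IsRoot (-a ⟨d - 1, Nat.sub_one_lt_of_lt hd⟩ v / d) := by
  obtain ⟨w, rfl⟩ := IsAlgClosed.exists_pow_nat_eq v hd
  have hw : w ∈ ball (0:ℂ) r := by
    rw [mem_ball_zero_iff, norm_pow] at hv
    exact mem_ball_zero_iff.mpr (lt_of_pow_lt_pow_left₀ d hr hv)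
  have hroot : -a ⟨d - 1, Nat.sub_one_lt_of_lt hd⟩ (w ^ d) / d = η w := by
    rw [eq_neg_coeff_pred_div_of_eq_X_sub_C_pow hd (hpow w hw)]
    exact congr_arg (-· / (d : ℂ)) (coeff_X_pow_add_sum_fin (fun j => a j (w ^ d)) _).symm
  rw [hroot, hpow w hw]
  simp [hd.ne']

theorem exists_taylor_coeff_not_divisible_general
    (d : ℕ) (hd : 2 ≤ d) (a : Fin d → ℂ → ℂ) (ha : ∀ i, AnalyticAt ℂ (a i) 0)
    (hirr : Irreducible (polyGerm d a ha))
    (r : ℝ) (hr : 0 < r) (η : ℂ → ℂ)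
    (hfac : ∀ w ∈ ball (0:ℂ) r,
      polyEval d a (w ^ d) =
        ∏ k ∈ Finset.range d,
          (X - C (η (Complex.exp (2 * Real.pi * I * k / d) * w))))
    (c : ℕ → ℂ) (hc : ∀ w ∈ ball (0:ℂ) r, HasSum (fun n => c n * w ^ n) (η w)) :
    ∃ L : ℕ, 1 ≤ L ∧ c L ≠ 0 ∧ ¬ (d ∣ L) := by
  by_contra! hcon
  have hd0 : d ≠ 0 := by omega
  have hdvd (n : ℕ) (hn : c n ≠ 0) : d ∣ n :=
    n.eq_zero_or_pos.elim (fun h => h ▸ dvd_zero d) (hcon n · hn)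
  have hpow : ∀ w ∈ ball (0:ℂ) r, polyEval d a (w ^ d) = (X - C (η w)) ^ d := by
    intro w hw
    rw [hfac w hw, Finset.prod_congr rfl fun k _ => by
      rw [apply_mul_eq_of_hasSum_of_pow_eq_one hc hd0 hdvd
        (exp_two_pi_I_mul_div_pow_self k hd0) hw],
      Finset.prod_const, Finset.card_range]
  have hg : AnalyticAt ℂ (fun v => -a ⟨d - 1, by omega⟩ v / d) 0 := (ha _).neg.div_const
  have hroot := isRoot_polyGerm_germOf ha hg <| eventually_of_mem (ball_mem_nhds 0 (pow_pos hr d))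
    fun v => isRoot_polyEval_of_eq_X_sub_C_pow (by omega) hr.le hpow
  refine (monic_X_pow_add_sum_fin _).not_isRoot_of_irreducible hirr ?_ _ hroot
  rw [natDegree_X_pow_add_sum_fin]
  omega

/-- If `P` is monic of degree `d ≥ 2` and irreducible over `𝒞₀^ω`, and `η` analytic on
`𝔻_r` gives the Newton factorization `P_{w^d}(z) = ∏_{k<d} (z - η(e^{2πik/d} w))`, with
Taylor expansion `η(w) = Σ_n c_n w^n`, then some Taylor coefficient `c_L` with `L ≥ 1`
and `d ∤ L` is nonzero. -/
theorem exists_taylor_coeff_not_divisible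
    (d : ℕ) (hd : 2 ≤ d) (a : Fin d → ℂ → ℂ) (ha : ∀ i, AnalyticAt ℂ (a i) 0)
    (hirr : Irreducible (polyGerm d a ha))
    (r : ℝ) (hr : 0 < r) (η : ℂ → ℂ) (hη : AnalyticOnNhd ℂ η (ball 0 r))
    (hfac : ∀ w ∈ ball (0:ℂ) r,
      polyEval d a (w ^ d) =
        ∏ k ∈ Finset.range d,
          (X - C (η (Complex.exp (2 * Real.pi * I * k / d) * w))))
    (c : ℕ → ℂ) (hc : ∀ w ∈ ball (0:ℂ) r, HasSum (fun n => c n * w ^ n) (η w)) :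
    ∃ L : ℕ, 1 ≤ L ∧ c L ≠ 0 ∧ ¬ (d ∣ L) :=
  exists_taylor_coeff_not_divisible_general d hd a ha hirr r hr η hfac c hc
end
end

section
/- Let d ≥ 2 and L ≥ 1 be integers with d not dividing L. Let λ be a complex-analytic function on a disc 𝔻_u (u > 0) with Taylor expansion λ(w) = Σ_{n=0}^∞ λ_n w^n, such that λ_0 = 0 and λ_m = 0 for every integer m with 1 ≤ m < L and d not dividing m. Let ω ∈ ℂ with |ω| = 1, let δ > 0, and let h : (−δ, δ) → ℝ be real-analytic with h(0) = 0 and h′(0) = 0. Suppose ζ : (−u′, u′) → ℝ (for some u′ ∈ (0, u]) satisfies ζ(t) = h( Re λ(ω t) ) for all t ∈ (−u′, u′). Then ζ is real-analytic near 0 and its L-th Taylor coefficient at 0 is zero. -/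
open Metric Complex Set

namespace Composition

theorem exists_not_dvd_blocksFun {n d : ℕ} (b : Composition n) (hdn : ¬ d ∣ n) :
    ∃ i, ¬ d ∣ b.blocksFun i := by
  by_contra! hall
  exact hdn (b.sum_blocksFun ▸ Finset.dvd_sum fun i _ => hall i)

end Composition

namespace FormalMultilinearSeries

variable {𝕜 E : Type*} [NontriviallyNormedField 𝕜] [NormedAddCommGroup E] [NormedSpace 𝕜 E]

theorem comp_coeff (q : FormalMultilinearSeries 𝕜 𝕜 E) (p : FormalMultilinearSeries 𝕜 𝕜 𝕜)
    (n : ℕ) :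
    (q.comp p).coeff n =
      ∑ b : Composition n, (∏ i, p.coeff (b.blocksFun i)) • q.coeff b.length := by
  simp only [coeff, FormalMultilinearSeries.comp, sum_apply, compAlongComposition_apply]
  refine Finset.sum_congr rfl fun b _ => ?_
  exact apply_eq_prod_smul_coeff ..

/-- Since `q` has no linear term, every monomial of degree `n` of `q ∘ p` uses at least two
coefficients of `p`, all of degree `< n`, and since `d ∤ n` one of those degrees is not
divisible by `d`. -/
theorem comp_coeff_eq_zero_of_not_dvd {q : FormalMultilinearSeries 𝕜 𝕜 E}
    {p : FormalMultilinearSeries 𝕜 𝕜 𝕜} {d n : ℕ} (hdn : ¬ d ∣ n) (hq : q.coeff 1 = 0)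
    (hp : ∀ m, 1 ≤ m → m < n → ¬ d ∣ m → p.coeff m = 0) :
    (q.comp p).coeff n = 0 := by
  have hn : 0 < n := Nat.pos_of_ne_zero fun h => hdn (h ▸ dvd_zero d)
  rw [comp_coeff]
  refine Finset.sum_eq_zero fun b _ => ?_
  by_cases hb : b.length = 1
  · rw [show q.coeff b.length = 0 from hb ▸ hq, smul_zero]
  · obtain ⟨i, hi⟩ := b.exists_not_dvd_blocksFun hdn
    have hb' := (Composition.ne_single_iff hn).1 (mt (Composition.eq_single_iff_length hn).1 hb)
    have hpi := hp _ (b.one_le_blocksFun i) (hb' i) hi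
    rw [Finset.prod_eq_zero (Finset.mem_univ i) hpi, zero_smul]

end FormalMultilinearSeries

open FormalMultilinearSeries

section PowerSeries

variable {𝕜 : Type*} [NontriviallyNormedField 𝕜]

theorem hasFPowerSeriesAt_ofScalars_of_hasSum {f : 𝕜 → 𝕜} {a : ℕ → 𝕜} {r : ℝ} (hr : 0 < r)
    (hf : ∀ t, ‖t‖ < r → HasSum (fun n => a n * t ^ n) (f t)) :
    HasFPowerSeriesAt f (ofScalars 𝕜 a) 0 := by
  rw [hasFPowerSeriesAt_iff]
  filter_upwards [ball_mem_nhds (0 : 𝕜) hr] with t ht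
  simpa [mul_comm] using hf t (mem_ball_zero_iff.1 ht)

theorem HasFPowerSeriesAt.iteratedDeriv_div_factorial [CompleteSpace 𝕜] [CharZero 𝕜]
    {f : 𝕜 → 𝕜} {p : FormalMultilinearSeries 𝕜 𝕜 𝕜} {x : 𝕜} (hf : HasFPowerSeriesAt f p x)
    (n : ℕ) : iteratedDeriv n f x / n.factorial = p.coeff n := by
  rw [← hf.analyticAt.hasFPowerSeriesAt.eq_formalMultilinearSeries hf, coeff_ofScalars]

end PowerSeries

theorem Complex.hasSum_re_mul_pow {c : ℕ → ℂ} {ω z : ℂ} {t : ℝ}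
    (h : HasSum (fun n => c n * (ω * t) ^ n) z) :
    HasSum (fun n => (c n * ω ^ n).re * t ^ n) z.re := by
  convert Complex.hasSum_re h using 2 with n
  rw [mul_pow, ← ofReal_pow, ← mul_assoc, re_mul_ofReal]

theorem zeta_taylor_coeff_vanishes_general
    (d L : ℕ) (hdL : ¬ (d ∣ L))
    (u : ℝ) (lam : ℂ → ℂ)
    (c : ℕ → ℂ) (hc : ∀ w ∈ ball (0:ℂ) u, HasSum (fun n => c n * w ^ n) (lam w))
    (hc0 : c 0 = 0)
    (hcm : ∀ m : ℕ, 1 ≤ m → m < L → ¬ (d ∣ m) → c m = 0)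
    (ω : ℂ) (hω : ‖ω‖ = 1)
    (δ : ℝ) (hδ : 0 < δ) (h : ℝ → ℝ)
    (hh : AnalyticOnNhd ℝ h (Ioo (-δ) δ)) (hh0' : deriv h 0 = 0)
    (u' : ℝ) (hu'0 : 0 < u') (hu'u : u' ≤ u) (ζ : ℝ → ℝ)
    (hζ : ∀ t : ℝ, |t| < u' → ζ t = h ((lam (ω * t)).re)) :
    AnalyticAt ℝ ζ 0 ∧ iteratedDeriv L ζ 0 / (Nat.factorial L) = 0 := by
  set φ : ℝ → ℝ := fun t => (lam (ω * t)).re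
  set a : ℕ → ℝ := fun n => (c n * ω ^ n).re
  have hφ : HasFPowerSeriesAt φ (ofScalars ℝ a) 0 := by
    refine hasFPowerSeriesAt_ofScalars_of_hasSum hu'0 fun t ht => Complex.hasSum_re_mul_pow ?_
    refine hc _ (mem_ball_zero_iff.2 ?_)
    rw [norm_mul, hω, one_mul, norm_real]
    exact ht.trans_le hu'u
  have hφ0 : φ 0 = 0 := by
    simpa [a, hc0] using (hφ.coeff_zero (fun _ => 0)).symm
  obtain ⟨Q, hQ⟩ := hh 0 ⟨neg_lt_zero.2 hδ, hδ⟩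
  have hQ1 : Q.coeff 1 = 0 := hQ.deriv.symm.trans hh0'
  have hζQ : HasFPowerSeriesAt ζ (Q.comp (ofScalars ℝ a)) 0 := by
    refine ((show HasFPowerSeriesAt h Q (φ 0) by rwa [hφ0]).comp hφ).congr ?_
    filter_upwards [ball_mem_nhds (0 : ℝ) hu'0] with t ht
    exact (hζ t (mem_ball_zero_iff.1 ht)).symm
  refine ⟨hζQ.analyticAt, ?_⟩
  rw [hζQ.iteratedDeriv_div_factorial]
  exact comp_coeff_eq_zero_of_not_dvd hdL hQ1 fun m h1 h2 h3 => by simp [a, hcm m h1 h2 h3]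

/-- Key computation in the main theorem: if `λ` is analytic on `𝔻_u` with Taylor
coefficients `c`, `c 0 = 0`, and every coefficient `c m` with `1 ≤ m < L` and `d ∤ m`
vanishes, `|ω| = 1`, `h` is real-analytic near `0` with `h 0 = 0`, `h' 0 = 0`, and
`ζ t = h (Re λ(ω t))` near `0`, then `ζ` is real-analytic at `0` and its `L`-th Taylor
coefficient vanishes. -/
theorem zeta_taylor_coeff_vanishes
    (d L : ℕ) (hd : 2 ≤ d) (hL : 1 ≤ L) (hdL : ¬ (d ∣ L))
    (u : ℝ) (hu : 0 < u) (lam : ℂ → ℂ) (hlam : AnalyticOnNhd ℂ lam (ball 0 u))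
    (c : ℕ → ℂ) (hc : ∀ w ∈ ball (0:ℂ) u, HasSum (fun n => c n * w ^ n) (lam w))
    (hc0 : c 0 = 0)
    (hcm : ∀ m : ℕ, 1 ≤ m → m < L → ¬ (d ∣ m) → c m = 0)
    (ω : ℂ) (hω : ‖ω‖ = 1)
    (δ : ℝ) (hδ : 0 < δ) (h : ℝ → ℝ)
    (hh : AnalyticOnNhd ℝ h (Ioo (-δ) δ)) (hh0 : h 0 = 0) (hh0' : deriv h 0 = 0)
    (u' : ℝ) (hu'0 : 0 < u') (hu'u : u' ≤ u) (ζ : ℝ → ℝ)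
    (hζ : ∀ t : ℝ, |t| < u' → ζ t = h ((lam (ω * t)).re)) :
    AnalyticAt ℝ ζ 0 ∧ iteratedDeriv L ζ 0 / (Nat.factorial L) = 0 :=
  zeta_taylor_coeff_vanishes_general d L hdL u lam c hc hc0 hcm ω hω δ hδ h hh hh0' u' hu'0 hu'u ζ
    hζ
end

section
/- Every monic polynomial P(z) ∈ 𝒞₀^ω[z] of degree 2 that has roots in the unit circle 𝕋 = {z ∈ ℂ : |z| = 1} is completely reducible. -/
/-! For real `t` near `0` the roots `λ, μ` of `P_t` lie on the unit circle, so the discriminant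
`a₁² - 4a₀ = (λ - μ)²` divided by `a₀ = λμ` is the real number `-|λ - μ|² ≤ 0`.
Write the discriminant as `w ^ m * g w` with `g 0 ≠ 0`: if `m` were odd, `g 0 / a₀ 0` would be
a limit both of nonpositive reals (from `t > 0`) and of nonnegative reals (from `t < 0`), hence
zero. So `m` is even, the discriminant has an analytic square root `q` near `0`, and the roots
`(-a₁ ± q) / 2` are analytic. -/

open Metric Polynomial Complex Filter Topology
open scoped ComplexOrder

theorem roots_quadratic_eq_pair {K : Type*} [Field K] [NeZero (2 : K)] {b c s : K}
    (hs : discrim 1 b c = s * s) :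
    (X ^ 2 + C b * X + C c : K[X]).roots = {(-b + s) / 2, (-b - s) / 2} := by
  have hb : C b = -(C ((-b + s) / 2) + C ((-b - s) / 2) : K[X]) := by
    rw [← C_add, ← C_neg]; congr 1; field_simp; ring
  have hc : C c = (C ((-b + s) / 2) * C ((-b - s) / 2) : K[X]) := by
    rw [← C_mul]; congr 1; rw [discrim] at hs; field_simp; linear_combination (-1 : K) * hs
  have hfactor : (X ^ 2 + C b * X + C c : K[X]) =
      (X - C ((-b + s) / 2)) * (X - C ((-b - s) / 2)) := by
    linear_combination X * hb + hc
  rw [hfactor, roots_mul (mul_ne_zero (X_sub_C_ne_zero _) (X_sub_C_ne_zero _)),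
    roots_X_sub_C, roots_X_sub_C]
  rfl

theorem Complex.sub_sq_div_mul_nonpos {l m : ℂ} (hl : ‖l‖ = 1) (hm : ‖m‖ = 1) :
    (l - m) ^ 2 / (l * m) ≤ 0 := by
  have hl0 : l ≠ 0 := norm_ne_zero_iff.mp (by simp [hl])
  have hm0 : m ≠ 0 := norm_ne_zero_iff.mp (by simp [hm])
  have hinv : ∀ z : ℂ, ‖z‖ = 1 → z⁻¹ = starRingEnd ℂ z := fun z hz => by
    rw [inv_def, normSq_eq_norm_sq, hz]; simp
  have hreal : (l - m) ^ 2 / (l * m) = -((‖l - m‖ ^ 2 : ℝ) : ℂ) := by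
    rw [ofReal_pow, ← mul_conj', map_sub, ← hinv l hl, ← hinv m hm]
    field_simp
    ring
  rw [hreal, neg_nonpos]
  exact zero_le_real.mpr (sq_nonneg _)

theorem norm_eq_one_and_discrim_div_nonpos_of_norm_roots_eq_one {b c : ℂ}
    (h : ∀ z ∈ (X ^ 2 + C b * X + C c : ℂ[X]).roots, ‖z‖ = 1) :
    ‖c‖ = 1 ∧ discrim 1 b c / c ≤ 0 := by
  obtain ⟨s, hs⟩ := IsAlgClosed.exists_eq_mul_self (discrim 1 b c)
  have hroots := roots_quadratic_eq_pair hs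
  have hl := h ((-b + s) / 2) (by simp [hroots])
  have hm := h ((-b - s) / 2) (by simp [hroots])
  have hc : c = (-b + s) / 2 * ((-b - s) / 2) := by
    rw [discrim] at hs; linear_combination (-1 / 4 : ℂ) * hs
  have hdiscrim : discrim 1 b c = ((-b + s) / 2 - (-b - s) / 2) ^ 2 := by
    rw [hs]; ring
  refine ⟨by rw [hc, norm_mul, hl, hm, one_mul], ?_⟩
  rw [hdiscrim, hc]
  exact sub_sq_div_mul_nonpos hl hm

theorem Complex.nonpos_of_ofReal_mul_nonpos {c : ℝ} {z : ℂ} (hc : 0 < c)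
    (h : (c : ℂ) * z ≤ 0) : z ≤ 0 := by
  have := mul_nonpos_of_nonneg_of_nonpos (zero_le_real.mpr (inv_nonneg.mpr hc.le)) h
  rwa [ofReal_inv, inv_mul_cancel_left₀ (ofReal_ne_zero.mpr hc.ne')] at this

theorem even_of_pow_mul_nonpos {φ : ℝ → ℂ} {x : ℝ} {m : ℕ} (hφ : ContinuousAt φ x)
    (hφx : φ x ≠ 0) (h : ∀ᶠ t in 𝓝 x, (((t - x) ^ m : ℝ) : ℂ) * φ t ≤ 0) : Even m := by
  by_contra hm
  have hodd : Odd m := Nat.not_even_iff_odd.mp hm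
  have hright : φ x ≤ 0 := by
    refine le_of_tendsto (hφ.mono_left (nhdsWithin_le_nhds (s := Set.Ioi x))) ?_
    filter_upwards [nhdsWithin_le_nhds h, self_mem_nhdsWithin] with t ht (htx : x < t)
    exact nonpos_of_ofReal_mul_nonpos (pow_pos (sub_pos.mpr htx) m) ht
  have hleft : -φ x ≤ 0 := by
    refine le_of_tendsto (hφ.neg.mono_left (nhdsWithin_le_nhds (s := Set.Iio x))) ?_
    filter_upwards [nhdsWithin_le_nhds h, self_mem_nhdsWithin] with t ht (htx : t < x)
    refine nonpos_of_ofReal_mul_nonpos (neg_pos.mpr (hodd.pow_neg (sub_neg.mpr htx))) ?_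
    simpa using ht
  exact hφx (le_antisymm hright (neg_nonpos.mp hleft))

theorem AnalyticAt.exists_pow_eq {f : ℂ → ℂ} {z : ℂ} (hf : AnalyticAt ℂ f z) (hfz : f z ≠ 0)
    {n : ℕ} (hn : n ≠ 0) : ∃ q : ℂ → ℂ, AnalyticAt ℂ q z ∧ ∀ w, q w ^ n = f w := by
  refine ⟨fun w => f z ^ (n⁻¹ : ℂ) * (f w / f z) ^ (n⁻¹ : ℂ), ?_, fun w => ?_⟩
  · refine analyticAt_const.mul ((hf.div analyticAt_const hfz).cpow analyticAt_const ?_)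
    simp only [Pi.div_apply, div_self hfz]
    exact one_mem_slitPlane
  · rw [mul_pow, cpow_nat_inv_pow _ hn, cpow_nat_inv_pow _ hn, mul_div_cancel₀ _ hfz]

theorem AnalyticAt.exists_sq_eq_of_div_nonpos_on_real {f g : ℂ → ℂ} {x : ℝ}
    (hf : AnalyticAt ℂ f x) (hg : AnalyticAt ℂ g x) (hgx : g x ≠ 0)
    (h : ∀ᶠ t : ℝ in 𝓝 x, f t / g t ≤ 0) :
    ∃ q : ℂ → ℂ, AnalyticAt ℂ q x ∧ ∀ᶠ w in 𝓝 (x : ℂ), q w ^ 2 = f w := by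
  cases hord : analyticOrderAt f x with
  | top =>
    exact ⟨0, analyticAt_const, (analyticOrderAt_eq_top.mp hord).mono fun w hw => by simp [hw]⟩
  | coe m =>
    obtain ⟨f₀, hf₀, hf₀x, hfeq⟩ := hf.analyticOrderAt_eq_natCast.mp hord
    have hφ : ContinuousAt (fun t : ℝ => f₀ t / g t) x :=
      (hf₀.continuousAt.div hg.continuousAt hgx).comp continuous_ofReal.continuousAt
    obtain ⟨k, rfl⟩ : Even m := by
      refine even_of_pow_mul_nonpos hφ (div_ne_zero hf₀x hgx) ?_
      filter_upwards [h, (continuous_ofReal.tendsto x).eventually hfeq] with t ht hft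
      rw [hft, smul_eq_mul, mul_div_assoc] at ht
      exact_mod_cast ht
    obtain ⟨q₀, hq₀, hq₀sq⟩ := hf₀.exists_pow_eq hf₀x two_ne_zero
    refine ⟨fun w => (w - x) ^ k * q₀ w, by fun_prop, hfeq.mono fun w hw => ?_⟩
    rw [hw, smul_eq_mul, mul_pow, hq₀sq, ← pow_mul, mul_two]

/-- Every monic degree-2 polynomial `z² + a₁ z + a₀` with coefficients analytic near `0`
whose roots (for small real parameter values) lie on the unit circle `𝕋` is completely
reducible. -/
theorem degree_two_roots_in_circle_completely_reducible
    (r : ℝ) (hr : 0 < r) (a₀ a₁ : ℂ → ℂ)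
    (ha₀ : AnalyticOnNhd ℂ a₀ (ball 0 r)) (ha₁ : AnalyticOnNhd ℂ a₁ (ball 0 r))
    (hroots : ∃ s, 0 < s ∧ s ≤ r ∧ ∀ t : ℝ, |t| < s →
      ∀ z ∈ ((X ^ 2 + C (a₁ (t : ℂ)) * X + C (a₀ (t : ℂ)) : Polynomial ℂ)).roots,
        ‖z‖ = 1) :
    ∃ u, 0 < u ∧ u ≤ r ∧ ∃ lam₁ lam₂ : ℂ → ℂ,
      AnalyticOnNhd ℂ lam₁ (ball 0 u) ∧ AnalyticOnNhd ℂ lam₂ (ball 0 u) ∧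
      ∀ w ∈ ball (0:ℂ) u,
        ((X ^ 2 + C (a₁ w) * X + C (a₀ w) : Polynomial ℂ)).roots = {lam₁ w, lam₂ w} := by
  obtain ⟨s, hs, -, hroots⟩ := hroots
  have hreal : ∀ᶠ t : ℝ in 𝓝 0, ‖a₀ t‖ = 1 ∧ discrim 1 (a₁ t) (a₀ t) / a₀ t ≤ 0 := by
    filter_upwards [ball_mem_nhds 0 hs] with t ht
    exact norm_eq_one_and_discrim_div_nonpos_of_norm_roots_eq_one (hroots t (by simpa using ht))
  have ha₀0 : AnalyticAt ℂ a₀ ((0 : ℝ) : ℂ) := by simpa using ha₀ 0 (mem_ball_self hr)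
  have ha₁0 : AnalyticAt ℂ a₁ ((0 : ℝ) : ℂ) := by simpa using ha₁ 0 (mem_ball_self hr)
  obtain ⟨q, hq, hqsq⟩ := AnalyticAt.exists_sq_eq_of_div_nonpos_on_real
    (f := fun w => discrim 1 (a₁ w) (a₀ w)) (by unfold discrim; fun_prop) ha₀0
    (norm_ne_zero_iff.mp (by rw [hreal.self_of_nhds.1]; exact one_ne_zero))
    (hreal.mono fun _ ht => ht.2)
  set lam₁ := fun w => (-a₁ w + q w) / 2
  set lam₂ := fun w => (-a₁ w - q w) / 2
  have hev : ∀ᶠ w in 𝓝 ((0 : ℝ) : ℂ), AnalyticAt ℂ lam₁ w ∧ AnalyticAt ℂ lam₂ w ∧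
      (X ^ 2 + C (a₁ w) * X + C (a₀ w) : ℂ[X]).roots = {lam₁ w, lam₂ w} := by
    filter_upwards [(by fun_prop : AnalyticAt ℂ lam₁ _).eventually_analyticAt,
      (by fun_prop : AnalyticAt ℂ lam₂ _).eventually_analyticAt, hqsq] with w h₁ h₂ hw
    exact ⟨h₁, h₂, roots_quadratic_eq_pair (by rw [← hw, sq])⟩
  rw [ofReal_zero] at hev
  obtain ⟨ε, hε, hball⟩ := eventually_nhds_iff_ball.mp hev
  have hsub : ball (0 : ℂ) (min ε r) ⊆ ball 0 ε := ball_subset_ball (min_le_left _ _)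
  exact ⟨min ε r, lt_min hε hr, min_le_right _ _, lam₁, lam₂, fun w hw => (hball w (hsub hw)).1,
    fun w hw => (hball w (hsub hw)).2.1, fun w hw => (hball w (hsub hw)).2.2⟩
end
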